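/- arXiv:1208.5371 — 5 statements merged into one kernel-verified Lean document; each statement's English description precedes it below -/
import Mathlib

section
/- Let S be a family of subsets of X = {a₁,…,aₙ} and let φ_w be the rising function of S with respect to the word w = a₁a₂…aₙ, with iterates φ_i. If there are two different elements z, z' ∈ S such that φ_i(z) = φ_i(z') ∪ {a_{i+1}}, then a_{i+1} ∈ z \ φ_w(z'). -/
/-!
Rising steps are injective on the current section and can only add the risen letter, so
`φ_i` is injective on `S` and every letter of `φ_i(z) \ z` occurs among `a₁, …, a_i`. Hence
`a_{i+1} ∈ φ_i(z)` forces `a_{i+1} ∈ z`, and `a_{i+1} ∉ φ_i(z')` by injectivity since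
`z ≠ z'`. As `φ_i(z') ∪ {a_{i+1}} = φ_i(z)` lies in the `i`-section, the `(i+1)`-st step
leaves `φ_i(z')` unchanged, and the remaining letters are different from `a_{i+1}`.
-/

open Finset

variable {α : Type*} [DecidableEq α]

/-- A family is union-closed if it is closed under pairwise unions. -/
def UnionClosed (F : Finset (Finset α)) : Prop := ∀ f ∈ F, ∀ g ∈ F, f ∪ g ∈ F

/-- One rising step: φ_{S,a}(z) = z ∪ {a} if z ∪ {a} ∉ S, and z otherwise. -/
def riseStep (S : Finset (Finset α)) (a : α) (z : Finset α) : Finset α :=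
  if insert a z ∈ S then z else insert a z

/-- Iterated rising function along a word (list of letters): at each step the
current family is replaced by its image and the next letter is risen. -/
def riseWord (S : Finset (Finset α)) : List α → Finset α → Finset α
  | [], z => z
  | a :: u, z => riseWord (S.image (riseStep S a)) u (riseStep S a z)

/-- The section of a family along (a prefix of) a word. -/
def riseSections (S : Finset (Finset α)) : List α → Finset (Finset α)
  | [] => S
  | a :: u => riseSections (S.image (riseStep S a)) u

namespace Rising

theorem riseStep_of_insert_mem {S : Finset (Finset α)} {a : α} {z : Finset α}
    (h : insert a z ∈ S) : riseStep S a z = z :=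
  if_pos h

theorem riseStep_subset_insert (S : Finset (Finset α)) (a : α) (z : Finset α) :
    riseStep S a z ⊆ insert a z := by
  unfold riseStep
  split_ifs
  · exact subset_insert a z
  · exact Subset.rfl

theorem riseStep_injOn (S : Finset (Finset α)) (a : α) :
    Set.InjOn (riseStep S a) S := by
  intro z hz z' hz' h
  unfold riseStep at h
  split_ifs at h with h₁ h₂ h₂
  · exact h
  · exact absurd (by rwa [h, insert_idem] at h₁) h₂
  · exact absurd (by rwa [← h, insert_idem] at h₂) h₁
  · have ha : a ∉ z := fun ha => h₁ (by rwa [insert_eq_of_mem ha])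
    have ha' : a ∉ z' := fun ha => h₂ (by rwa [insert_eq_of_mem ha])
    rw [← erase_insert ha, h, erase_insert ha']

theorem riseWord_cons (S : Finset (Finset α)) (a : α) (u : List α) (z : Finset α) :
    riseWord S (a :: u) z = riseWord (S.image (riseStep S a)) u (riseStep S a z) :=
  rfl

theorem riseWord_append (u v : List α) (S : Finset (Finset α)) (z : Finset α) :
    riseWord S (u ++ v) z = riseWord (riseSections S u) v (riseWord S u z) := by
  induction u generalizing S z with
  | nil => rfl
  | cons a u ih => exact ih _ _

theorem riseWord_mem_riseSections (u : List α) {S : Finset (Finset α)} {z : Finset α}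
    (hz : z ∈ S) : riseWord S u z ∈ riseSections S u := by
  induction u generalizing S z with
  | nil => exact hz
  | cons a u ih => exact ih (mem_image_of_mem _ hz)

theorem riseWord_injOn (u : List α) (S : Finset (Finset α)) :
    Set.InjOn (riseWord S u) S := by
  induction u generalizing S with
  | nil => exact fun _ _ _ _ h => h
  | cons a u ih =>
    intro z hz z' hz' h
    exact riseStep_injOn S a hz hz'
      (ih _ (mem_image_of_mem _ hz) (mem_image_of_mem _ hz') h)

theorem riseWord_subset_union (u : List α) (S : Finset (Finset α)) (z : Finset α) :
    riseWord S u z ⊆ z ∪ u.toFinset := by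
  induction u generalizing S z with
  | nil => simp [riseWord]
  | cons a u ih =>
    calc riseWord S (a :: u) z ⊆ riseStep S a z ∪ u.toFinset := ih _ _
      _ ⊆ insert a z ∪ u.toFinset := union_subset_union_left (riseStep_subset_insert S a z)
      _ = z ∪ (a :: u).toFinset := by rw [List.toFinset_cons, insert_union, union_insert]

theorem mem_of_mem_riseWord {u : List α} {S : Finset (Finset α)} {z : Finset α} {a : α}
    (hau : a ∉ u) (ha : a ∈ riseWord S u z) : a ∈ z := by
  simpa [hau] using riseWord_subset_union u S z ha

end Rising

open Rising

theorem stmt_0_general {α : Type*} [DecidableEq α]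
    (S : Finset (Finset α)) (w : List α) (hnd : w.Nodup)
    (i : ℕ) (hi : i < w.length)
    (z z' : Finset α) (hz : z ∈ S) (hz' : z' ∈ S) (hne : z ≠ z')
    (heq : riseWord S (w.take i) z =
      insert (w.get ⟨i, hi⟩) (riseWord S (w.take i) z')) :
    w.get ⟨i, hi⟩ ∈ z ∧ w.get ⟨i, hi⟩ ∉ riseWord S w z' := by
  have hw : w = w.take i ++ w.get ⟨i, hi⟩ :: w.drop (i + 1) := by
    rw [List.get_eq_getElem, ← List.drop_eq_getElem_cons hi, List.take_append_drop]
  set a := w.get ⟨i, hi⟩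
  obtain ⟨hau, hav⟩ : a ∉ w.take i ∧ a ∉ w.drop (i + 1) := by
    have := (List.nodup_cons.mp (List.nodup_middle.mp (hw ▸ hnd))).1
    simpa only [List.mem_append, not_or] using this
  have hay : a ∉ riseWord S (w.take i) z' := fun ha =>
    hne (riseWord_injOn _ S hz hz' (by rw [heq, insert_eq_of_mem ha]))
  have hstep : riseStep (riseSections S (w.take i)) a (riseWord S (w.take i) z') =
      riseWord S (w.take i) z' :=
    riseStep_of_insert_mem (heq ▸ riseWord_mem_riseSections _ hz)
  refine ⟨mem_of_mem_riseWord hau (heq ▸ mem_insert_self a _), fun ha => ?_⟩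
  rw [hw, riseWord_append, riseWord_cons, hstep] at ha
  exact hay (mem_of_mem_riseWord hav ha)

/-- Lemma 3.1 (matching property): if φ_i(z) = φ_i(z') ∪ {a_{i+1}} for two
different elements z, z' of the family S, then a_{i+1} ∈ z \ φ_w(z'). -/
theorem stmt_0 {α : Type*} [DecidableEq α] [Fintype α]
    (S : Finset (Finset α)) (w : List α) (hnd : w.Nodup) (hall : ∀ x : α, x ∈ w)
    (i : ℕ) (hi : i < w.length)
    (z z' : Finset α) (hz : z ∈ S) (hz' : z' ∈ S) (hne : z ≠ z')
    (heq : riseWord S (w.take i) z =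
      insert (w.get ⟨i, hi⟩) (riseWord S (w.take i) z')) :
    w.get ⟨i, hi⟩ ∈ z ∧ w.get ⟨i, hi⟩ ∉ riseWord S w z' :=
  stmt_0_general S w hnd i hi z z' hz hz' hne heq
end

section
/- Let 𝔉 be a union-closed family of subsets of X = {a₁,…,aₙ}, let f ∈ 𝔉, and consider the rising function φ_w with respect to w = a₁a₂…aₙ with i-sections 𝔉_i. If t belongs to the i-section 𝔉_i for some 1 ≤ i ≤ n, then also t ∪ f ∈ 𝔉_i. -/
open Finset

variable {α : Type*} [DecidableEq α]

private lemma ins_mem {S : Finset (Finset α)} {a : α} {z : Finset α} (hz : z ∈ S) :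
    insert a z ∈ S.image (riseStep S a) := by
  by_cases h : insert a z ∈ S
  · exact Finset.mem_image.mpr ⟨insert a z, h, by simp [riseStep, Finset.insert_idem, h]⟩
  · exact Finset.mem_image.mpr ⟨z, hz, by simp [riseStep, h]⟩

private lemma kept_mem {S : Finset (Finset α)} {a : α} {z : Finset α} (hz : z ∈ S)
    (h : insert a z ∈ S) : z ∈ S.image (riseStep S a) :=
  Finset.mem_image.mpr ⟨z, hz, by simp [riseStep, h]⟩

private lemma step_unionClosed {S : Finset (Finset α)} (hS : UnionClosed S) (a : α) :
    UnionClosed (S.image (riseStep S a)) := by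
  intro t' ht' u' hu'
  obtain ⟨t, ht, rfl⟩ := Finset.mem_image.mp ht'
  obtain ⟨u, hu, rfl⟩ := Finset.mem_image.mp hu'
  have htu : t ∪ u ∈ S := hS t ht u hu
  unfold riseStep
  by_cases h1 : insert a t ∈ S <;> by_cases h2 : insert a u ∈ S
  · rw [if_pos h1, if_pos h2]
    have h3 : insert a (t ∪ u) ∈ S := by
      have := hS _ h1 _ hu
      rwa [Finset.insert_union] at this
    exact kept_mem htu h3
  · rw [if_pos h1, if_neg h2, Finset.union_insert]
    exact ins_mem htu
  · rw [if_neg h1, if_pos h2, Finset.insert_union]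
    exact ins_mem htu
  · rw [if_neg h1, if_neg h2, Finset.insert_union, Finset.union_insert,
      Finset.insert_idem]
    exact ins_mem htu

private lemma step_fclosed {S : Finset (Finset α)} {f : Finset α} (hS : UnionClosed S)
    (hfS : ∀ t ∈ S, t ∪ f ∈ S) (a : α) :
    ∀ t ∈ S.image (riseStep S a), t ∪ f ∈ S.image (riseStep S a) := by
  intro t' ht'
  obtain ⟨t, ht, rfl⟩ := Finset.mem_image.mp ht'
  have htf : t ∪ f ∈ S := hfS t ht
  unfold riseStep
  by_cases h1 : insert a t ∈ S
  · rw [if_pos h1]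
    have h2 : insert a (t ∪ (t ∪ f)) ∈ S := by
      have := hS _ h1 _ htf
      rwa [Finset.insert_union] at this
    rw [← Finset.union_assoc, Finset.union_self] at h2
    exact kept_mem htf h2
  · rw [if_neg h1, Finset.insert_union]
    exact ins_mem htf

private lemma sections_fclosed {f : Finset α} :
    ∀ (u : List α) (S : Finset (Finset α)), UnionClosed S → (∀ t ∈ S, t ∪ f ∈ S) →
      ∀ t ∈ riseSections S u, t ∪ f ∈ riseSections S u
  | [], S, _, hfS => by simpa [riseSections] using hfS
  | a :: u, S, hS, hfS => by
    simp only [riseSections]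
    exact sections_fclosed u _ (step_unionClosed hS a) (step_fclosed hS hfS a)

/-- Lemma 3.3: for a union-closed family 𝔉 and f ∈ 𝔉, each i-section 𝔉_i
is closed under unions with f: t ∈ 𝔉_i implies t ∪ f ∈ 𝔉_i. -/
theorem stmt_1 {α : Type*} [DecidableEq α] [Fintype α]
    (F : Finset (Finset α)) (hF : UnionClosed F)
    (w : List α) (hnd : w.Nodup) (hall : ∀ x : α, x ∈ w)
    (f : Finset α) (hf : f ∈ F)
    (i : ℕ) (h1 : 1 ≤ i) (hi : i ≤ w.length)
    (t : Finset α) (ht : t ∈ riseSections F (w.take i)) :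
    t ∪ f ∈ riseSections F (w.take i) :=
  sections_fclosed (w.take i) F hF (fun t ht => hF t ht f hf) t ht
end

section
/- Let 𝔉 be a union-closed family of subsets of X = {a₁,…,aₙ}, let φ_w be its rising function with respect to w = a₁a₂…aₙ, and let ℱ = φ_w(𝔉). Then for each S ⊆ 𝔉, φ_w restricts to a bijection from 𝔉[S] onto ℱ[S]. Moreover, the inverse of φ_w : 𝔉 → ℱ is given by φ_w⁻¹(η) = ⋃ { f ∈ 𝔉 : f ⊆ η }. -/
open Finset

variable {α : Type*} [DecidableEq α]

lemma subset_riseStep (S : Finset (Finset α)) (a : α) (z : Finset α) :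
    z ⊆ riseStep S a z := by
  unfold riseStep; split
  · exact Finset.Subset.refl _
  · exact Finset.subset_insert _ _

lemma subset_riseWord (u : List α) : ∀ (S : Finset (Finset α)) (z : Finset α),
    z ⊆ riseWord S u z := by
  induction u with
  | nil => intro S z; simp [riseWord]
  | cons a u ih =>
    intro S z
    simp only [riseWord]
    exact (subset_riseStep S a z).trans (ih _ _)

lemma riseStep_injOn (S : Finset (Finset α)) (a : α) :
    ∀ z ∈ S, ∀ z' ∈ S, riseStep S a z = riseStep S a z' → z = z' := by
  intro z hz z' hz' h
  unfold riseStep at h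
  split_ifs at h with h1 h2 h2
  · exact h
  · exact absurd (h ▸ hz) h2
  · exact absurd (h ▸ hz') h1
  · have ha : a ∉ z := fun ha => h1 (by rwa [Finset.insert_eq_self.2 ha])
    have ha' : a ∉ z' := fun ha => h2 (by rwa [Finset.insert_eq_self.2 ha])
    have := congrArg (fun s => Finset.erase s a) h
    simpa [Finset.erase_insert ha, Finset.erase_insert ha'] using this

lemma unionClosed_image (G : Finset (Finset α)) (a : α) (hG : UnionClosed G) :
    UnionClosed (G.image (riseStep G a)) := by
  intro f hf g hg
  simp only [mem_image] at hf hg ⊢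
  obtain ⟨x, hx, rfl⟩ := hf
  obtain ⟨y, hy, rfl⟩ := hg
  by_cases hx' : insert a x ∈ G <;> by_cases hy' : insert a y ∈ G
  · refine ⟨x ∪ y, hG x hx y hy, ?_⟩
    have : insert a (x ∪ y) ∈ G := by
      have := hG _ hx' _ hy'
      rwa [Finset.insert_union, Finset.union_insert, Finset.insert_idem] at this
    simp [riseStep, hx', hy', this]
  all_goals {
    have hval : riseStep G a x ∪ riseStep G a y = insert a (x ∪ y) := by
      simp only [riseStep]
      split_ifs <;> simp [Finset.insert_union, Finset.union_insert, Finset.insert_idem] <;> tauto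
    by_cases hI : insert a (x ∪ y) ∈ G
    · refine ⟨insert a (x ∪ y), hI, ?_⟩
      rw [hval]
      simp [riseStep, Finset.insert_idem, hI]
    · exact ⟨x ∪ y, hG x hx y hy, by rw [hval]; simp [riseStep, hI]⟩
  }

lemma riseWord_injOn (u : List α) : ∀ (G : Finset (Finset α)),
    ∀ z ∈ G, ∀ z' ∈ G, riseWord G u z = riseWord G u z' → z = z' := by
  induction u with
  | nil => intro G z _ z' _ h; simpa [riseWord] using h
  | cons a u ih =>
    intro G z hz z' hz' h
    simp only [riseWord] at h
    exact riseStep_injOn G a z hz z' hz'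
      (ih _ _ (mem_image_of_mem _ hz) _ (mem_image_of_mem _ hz') h)

lemma riseWord_union (u : List α) : ∀ (G : Finset (Finset α)), UnionClosed G →
    ∀ z ∈ G, ∀ g ∈ G, z ⊆ riseWord G u g →
    riseWord G u (z ∪ g) = riseWord G u g := by
  induction u with
  | nil =>
    intro G _ z _ g _ h
    simp only [riseWord] at h ⊢
    exact Finset.union_eq_right.2 h
  | cons a u ih =>
    intro G hG z hz g hg hsub
    have hG' : UnionClosed (G.image (riseStep G a)) := unionClosed_image G a hG
    set G' := G.image (riseStep G a) with hG'def
    simp only [riseWord] at hsub ⊢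
    have hzgG : z ∪ g ∈ G := hG z hz g hg
    by_cases hA : insert a (z ∪ g) ∈ G <;> by_cases hB : insert a g ∈ G
    · -- both kept
      have e1 : riseStep G a (z ∪ g) = z ∪ g := by simp [riseStep, hA]
      have e2 : riseStep G a g = g := by simp [riseStep, hB]
      rw [e1, e2]
      rw [e2] at hsub
      have hm1 : z ∪ g ∈ G' := by
        refine mem_image.2 ⟨z ∪ g, hzgG, e1⟩
      have hm2 : g ∈ G' := mem_image.2 ⟨g, hg, e2⟩
      have := ih G' hG' (z ∪ g) hm1 g hm2
        (Finset.union_subset hsub (subset_riseWord u G' g))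
      simpa [Finset.union_assoc] using this
    · -- z∪g kept, g raised
      have e1 : riseStep G a (z ∪ g) = z ∪ g := by simp [riseStep, hA]
      have e2 : riseStep G a g = insert a g := by simp [riseStep, hB]
      rw [e1, e2]
      rw [e2] at hsub
      have hgR : g ⊆ riseWord G' u (insert a g) :=
        (Finset.subset_insert a g).trans (subset_riseWord u G' _)
      have hm1 : z ∪ g ∈ G' := mem_image.2 ⟨z ∪ g, hzgG, e1⟩
      have hm2 : insert a g ∈ G' := mem_image.2 ⟨g, hg, e2⟩
      have hY : (z ∪ g) ∪ insert a g = insert a (z ∪ g) := by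
        rw [Finset.union_insert, Finset.union_assoc, Finset.union_self]
      have hYG : insert a (z ∪ g) ∈ G' := by
        refine mem_image.2 ⟨insert a (z ∪ g), hA, ?_⟩
        simp [riseStep, Finset.insert_idem, hA]
      have hih := ih G' hG' (z ∪ g) hm1 (insert a g) hm2
        (Finset.union_subset hsub hgR)
      rw [hY] at hih
      have heq : insert a (z ∪ g) = insert a g :=
        riseWord_injOn u G' _ hYG _ hm2 hih
      by_cases haz : a ∈ z ∪ g
      · rw [← Finset.insert_eq_self.2 haz, heq]
      · exfalso
        have : z ∪ g ⊆ g := fun x hx => by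
          have : x ∈ insert a g := heq ▸ Finset.mem_insert_of_mem hx
          rcases Finset.mem_insert.1 this with rfl | h
          · exact absurd hx haz
          · exact h
        have : z ∪ g = g := Finset.Subset.antisymm this Finset.subset_union_right
        exact hB (this ▸ hA)
    · -- z∪g raised, g kept : contradiction
      exfalso
      have : z ∪ insert a g ∈ G := hG z hz _ hB
      rw [Finset.union_insert] at this
      exact hA this
    · -- both raised
      have e1 : riseStep G a (z ∪ g) = insert a (z ∪ g) := by simp [riseStep, hA]
      have e2 : riseStep G a g = insert a g := by simp [riseStep, hB]
      rw [e1, e2]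
      rw [e2] at hsub
      have hgR : g ⊆ riseWord G' u (insert a g) :=
        (Finset.subset_insert a g).trans (subset_riseWord u G' _)
      have hm1 : insert a (z ∪ g) ∈ G' := mem_image.2 ⟨z ∪ g, hzgG, e1⟩
      have hm2 : insert a g ∈ G' := mem_image.2 ⟨g, hg, e2⟩
      have haR : a ∈ riseWord G' u (insert a g) :=
        (subset_riseWord u G' (insert a g)) (Finset.mem_insert_self a g)
      have hYsub : insert a (z ∪ g) ⊆ riseWord G' u (insert a g) :=
        Finset.insert_subset haR (Finset.union_subset hsub hgR)
      have hih := ih G' hG' (insert a (z ∪ g)) hm1 (insert a g) hm2 hYsub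
      have hY : insert a (z ∪ g) ∪ insert a g = insert a (z ∪ g) := by
        rw [Finset.insert_union, Finset.union_insert, Finset.insert_idem,
          Finset.union_assoc, Finset.union_self]
      rwa [hY] at hih

lemma riseWord_subset_of_subset (u : List α) (G : Finset (Finset α)) (hG : UnionClosed G)
    {z g : Finset α} (hz : z ∈ G) (hg : g ∈ G) (h : z ⊆ riseWord G u g) : z ⊆ g := by
  have h1 := riseWord_union u G hG z hz g hg h
  have h2 : z ∪ g = g := riseWord_injOn u G _ (hG z hz g hg) _ hg h1
  exact Finset.union_eq_right.1 h2

/-- Corollary 3.5: for each S ⊆ 𝔉, φ_w is a bijection between 𝔉[S] and ℱ[S];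
moreover the inverse of φ_w : 𝔉 → ℱ is η ↦ ⋃ { f ∈ 𝔉 : f ⊆ η }. -/
theorem stmt_3 {α : Type*} [DecidableEq α] [Fintype α]
    (F : Finset (Finset α)) (hF : UnionClosed F)
    (hcov : ∀ x : α, ∃ f ∈ F, x ∈ f)
    (w : List α) (hnd : w.Nodup) (hall : ∀ x : α, x ∈ w)
    (S : Finset (Finset α)) (hS : S ⊆ F) :
    Set.BijOn (riseWord F w)
      {g : Finset α | g ∈ F ∧ ∃ z ∈ S, z ⊆ g}
      {η : Finset α | η ∈ F.image (riseWord F w) ∧ ∃ z ∈ S, z ⊆ η} ∧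
    (∀ η ∈ F.image (riseWord F w),
        (F.filter fun f => f ⊆ η).sup id ∈ F ∧
        riseWord F w ((F.filter fun f => f ⊆ η).sup id) = η) ∧
    (∀ g ∈ F, (F.filter fun f => f ⊆ riseWord F w g).sup id = g) := by

  have key : ∀ g ∈ F, (F.filter fun f => f ⊆ riseWord F w g).sup id = g := by
    intro g hg
    apply le_antisymm
    · apply Finset.sup_le
      intro f hf
      simp only [mem_filter] at hf
      exact riseWord_subset_of_subset w F hF hf.1 hg hf.2
    · exact Finset.le_sup (f := id)
        (mem_filter.2 ⟨hg, subset_riseWord w F g⟩)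
  refine ⟨⟨?_, ?_, ?_⟩, ?_, key⟩
  · rintro g ⟨hgF, z, hzS, hzg⟩
    exact ⟨mem_image_of_mem _ hgF, z, hzS, hzg.trans (subset_riseWord w F g)⟩
  · rintro g ⟨hg, -⟩ g' ⟨hg', -⟩ h
    exact riseWord_injOn w F g hg g' hg' h
  · rintro η ⟨hη, z, hzS, hzη⟩
    obtain ⟨g, hgF, rfl⟩ := mem_image.1 hη
    exact ⟨g, ⟨hgF, z, hzS,
      riseWord_subset_of_subset w F hF (hS hzS) hgF hzη⟩, rfl⟩
  · intro η hη
    obtain ⟨g, hg, rfl⟩ := mem_image.1 hη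
    rw [key g hg]
    exact ⟨hg, rfl⟩
end

section
/- Let 𝔉 be a union-closed family of subsets of X with |X| = n, let U(𝔉) = ⋃_θ φ_{wθ}(𝔉) be its invariant upward-closed family, and let rk(𝔉) = min{ |η| : η ∈ min(U(𝔉)) }. Then 2^{n − rk(𝔉)} ≤ |𝔉| ≤ Σ_{i ≥ rk(𝔉)} C(n, i), and both bounds are tight (attained by suitable union-closed families). -/
/-!
Each rising step is injective on the current family, so every section `φ_{wθ}(𝔉)` has
exactly `|𝔉|` members. A word containing every letter makes the section closed under adding
any letter, hence an upper set. A minimal `η ∈ U(𝔉)` of size `rk(𝔉)` therefore drags into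
its section all `2^(n - rk(𝔉))` supersets of `η`, while every member of `U(𝔉)` lies above a
minimal one and so has size at least `rk(𝔉)`. Upper sets are fixed by all rising functions,
so for them `U` is the family itself; the principal filter of a `k`-set and the family of all
sets of size `≥ k` then have rank `k` and attain the two bounds.
-/

open Finset

variable {α : Type*} [DecidableEq α]

/-- The set of minimal elements of a family (under inclusion). -/
def minsF (F : Finset (Finset α)) : Finset (Finset α) :=
  F.filter fun h => ∀ g ∈ F, g ⊆ h → g = h

/-- The operator z ↦ z* = ⋃ { h ∈ F : h ⊆ z }. -/
def starOp (F : Finset (Finset α)) (z : Finset α) : Finset α :=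
  (F.filter fun f => f ⊆ z).sup id

/-- The fiber Fib(g) = { h ∈ min(F)↑ : h* = g }. -/
def FibS (F : Finset (Finset α)) (g : Finset α) : Set (Finset α) :=
  {h | (∃ m ∈ minsF F, m ⊆ h) ∧ starOp F h = g}

/-- The invariant upward-closed family U(𝔉) = ⋃_{θ ∈ 𝔖_X} φ_{wθ}(𝔉). -/
def invU {α : Type*} [DecidableEq α] [Fintype α]
    (F : Finset (Finset α)) (w : List α) : Finset (Finset α) :=
  (Finset.univ : Finset (Equiv.Perm α)).biUnion fun θ => F.image (riseWord F (w.map θ))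

/-- rk(𝔉) = min{ |η| : η ∈ min(U(𝔉)) }. -/
noncomputable def rkF {α : Type*} [DecidableEq α] [Fintype α]
    (F : Finset (Finset α)) (w : List α) : ℕ :=
  sInf {k : ℕ | ∃ η ∈ minsF (invU F w), η.card = k}

lemma riseStep_injOn_s9 (S : Finset (Finset α)) (a : α) : Set.InjOn (riseStep S a) S := by
  intro z₁ h₁ z₂ h₂ he
  by_cases h₃ : insert a z₁ ∈ S <;> by_cases h₄ : insert a z₂ ∈ S <;>
    simp only [riseStep, h₃, h₄, if_true, if_false] at he
  · exact he
  · exact absurd (he ▸ h₁) h₄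
  · exact absurd (he ▸ h₂) h₃
  · have ha₁ : a ∉ z₁ := fun ha => h₃ (by rwa [insert_eq_self.2 ha])
    have ha₂ : a ∉ z₂ := fun ha => h₄ (by rwa [insert_eq_self.2 ha])
    rw [← erase_insert ha₁, ← erase_insert ha₂, he]

lemma card_riseSections (S : Finset (Finset α)) (u : List α) :
    (riseSections S u).card = S.card := by
  induction u generalizing S with
  | nil => rfl
  | cons a u ih => rw [riseSections, ih, card_image_of_injOn (riseStep_injOn_s9 S a)]

lemma image_riseWord (S : Finset (Finset α)) (u : List α) :
    S.image (riseWord S u) = riseSections S u := by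
  induction u generalizing S with
  | nil => exact image_id'
  | cons a u ih =>
    rw [riseSections, ← ih, image_image]
    rfl

def InsertClosed (S : Finset (Finset α)) (a : α) : Prop := ∀ z ∈ S, insert a z ∈ S

lemma insertClosed_image_riseStep_self (S : Finset (Finset α)) (a : α) :
    InsertClosed (S.image (riseStep S a)) a := by
  intro z hz
  obtain ⟨y, hy, rfl⟩ := mem_image.1 hz
  rw [mem_image]
  by_cases h : insert a y ∈ S
  · exact ⟨insert a y, h, by simp only [riseStep, insert_idem, h, if_true]⟩
  · exact ⟨y, hy, by simp only [riseStep, insert_idem, h, if_false]⟩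

lemma InsertClosed.image_riseStep {S : Finset (Finset α)} {a : α} (h : InsertClosed S a)
    (b : α) : InsertClosed (S.image (riseStep S b)) a := by
  intro y hy
  obtain ⟨z, hz, rfl⟩ := mem_image.1 hy
  rw [mem_image]
  have haz : insert a z ∈ S := h z hz
  by_cases hb : insert b z ∈ S
  · have hab : insert b (insert a z) ∈ S := by
      rw [insert_comm]
      exact h _ hb
    exact ⟨insert a z, haz, by rw [riseStep, if_pos hab, riseStep, if_pos hb]⟩
  · by_cases hab : insert b (insert a z) ∈ S
    · refine ⟨insert b (insert a z), hab, ?_⟩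
      rw [riseStep, if_pos (by rwa [insert_idem]), riseStep, if_neg hb, insert_comm]
    · exact ⟨insert a z, haz, by rw [riseStep, if_neg hab, riseStep, if_neg hb, insert_comm]⟩

lemma insertClosed_riseSections {S : Finset (Finset α)} {a : α} (h : InsertClosed S a)
    (u : List α) : InsertClosed (riseSections S u) a := by
  induction u generalizing S with
  | nil => exact h
  | cons b u ih => exact ih (h.image_riseStep b)

lemma insertClosed_riseSections_of_mem (S : Finset (Finset α)) {u : List α} {a : α}
    (ha : a ∈ u) : InsertClosed (riseSections S u) a := by
  induction u generalizing S with
  | nil => exact absurd ha List.not_mem_nil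
  | cons b u ih =>
    rcases List.mem_cons.1 ha with rfl | ha
    · exact insertClosed_riseSections (insertClosed_image_riseStep_self S a) u
    · exact ih _ ha

lemma isUpperSet_of_insertClosed {S : Finset (Finset α)} (h : ∀ a, InsertClosed S a) :
    IsUpperSet (S : Set (Finset α)) := by
  have union_mem : ∀ d : Finset α, ∀ y ∈ S, y ∪ d ∈ S := by
    intro d
    induction d using Finset.induction_on with
    | empty => simp
    | insert a d _ ih =>
      intro y hy
      rw [union_insert]
      exact h a _ (ih y hy)
  intro z z' hzz' hz
  simpa [union_sdiff_of_subset hzz'] using union_mem (z' \ z) z hz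

lemma isUpperSet_riseSections (S : Finset (Finset α)) {u : List α} (hu : ∀ a, a ∈ u) :
    IsUpperSet (riseSections S u : Set (Finset α)) :=
  isUpperSet_of_insertClosed fun a => insertClosed_riseSections_of_mem S (hu a)

lemma riseWord_eq_self_of_isUpperSet {S : Finset (Finset α)}
    (hS : IsUpperSet (S : Set (Finset α))) (u : List α) {z : Finset α} (hz : z ∈ S) :
    riseWord S u z = z := by
  have fix : ∀ {a y}, y ∈ S → riseStep S a y = y := fun hy =>
    if_pos (hS (subset_insert _ _) hy)
  induction u with
  | nil => rfl
  | cons a u ih =>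
    have hid : Set.EqOn (riseStep S a) id S := fun y hy => fix hy
    have himage : S.image (riseStep S a) = S := by rw [image_congr hid, image_id]
    rw [riseWord, himage, fix hz, ih]

lemma mem_minsF {F : Finset (Finset α)} {η : Finset α} :
    η ∈ minsF F ↔ η ∈ F ∧ ∀ g ∈ F, g ⊆ η → g = η :=
  mem_filter

lemma exists_mem_minsF_subset {F : Finset (Finset α)} {z : Finset α} (hz : z ∈ F) :
    ∃ m ∈ minsF F, m ⊆ z := by
  obtain ⟨m, hm, hmin⟩ :=
    (F.filter (· ⊆ z)).exists_min_image card ⟨z, mem_filter.2 ⟨hz, Subset.rfl⟩⟩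
  obtain ⟨hmF, hmz⟩ := mem_filter.1 hm
  refine ⟨m, mem_minsF.2 ⟨hmF, fun g hg hgm => ?_⟩, hmz⟩
  exact eq_of_subset_of_card_le hgm (hmin g (mem_filter.2 ⟨hg, hgm.trans hmz⟩))

lemma mem_of_mem_minsF {F : Finset (Finset α)} {η : Finset α} (h : η ∈ minsF F) : η ∈ F :=
  (mem_minsF.1 h).1

lemma isUpperSet_Icc_univ [Fintype α] (t : Finset α) :
    IsUpperSet (Icc t univ : Set (Finset α)) := fun _ b hab ha =>
  mem_Icc.2 ⟨(mem_Icc.1 ha).1.trans hab, subset_univ b⟩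

lemma card_eq_of_mem_minsF_Icc_univ [Fintype α] {t η : Finset α}
    (hη : η ∈ minsF (Icc t univ)) : η.card = t.card := by
  rw [((mem_minsF.1 hη).2 t (by simp) (mem_Icc.1 (mem_of_mem_minsF hη)).1).symm]

lemma isUpperSet_filter_le_card {β : Type*} [Fintype β] (k : ℕ) :
    IsUpperSet (univ.filter fun s : Finset β => k ≤ s.card : Set (Finset β)) :=
  fun _ _ hab ha => mem_filter.2 ⟨mem_univ _, (mem_filter.1 ha).2.trans (card_le_card hab)⟩

lemma card_eq_of_mem_minsF_filter_le_card [Fintype α] {k : ℕ} {η : Finset α}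
    (hη : η ∈ minsF (univ.filter fun s => k ≤ s.card)) : η.card = k := by
  obtain ⟨hηk, hmin⟩ := mem_minsF.1 hη
  have hk : k ≤ η.card := (mem_filter.1 hηk).2
  by_contra hne
  obtain ⟨a, ha⟩ := card_pos.1 (by omega : 0 < η.card)
  have herase : η.erase a = η :=
    hmin _ (mem_filter.2 ⟨mem_univ _, by rw [card_erase_of_mem ha]; omega⟩) (erase_subset _ _)
  exact erase_eq_self.1 herase ha

lemma unionClosed_of_isUpperSet {S : Finset (Finset α)} (hS : IsUpperSet (S : Set (Finset α))) :
    UnionClosed S := fun _ hf _ _ => hS subset_union_left hf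

lemma card_filter_le_card_univ {β : Type*} [Fintype β] (k : ℕ) :
    (univ.filter fun s : Finset β => k ≤ s.card).card =
      ∑ i ∈ Icc k (Fintype.card β), (Fintype.card β).choose i := by
  rw [card_eq_sum_card_fiberwise (f := card) (t := Icc k (Fintype.card β))]
  · refine sum_congr rfl fun i hi => ?_
    have hfiber : {s ∈ univ.filter fun s : Finset β => k ≤ s.card | s.card = i} =
        powersetCard i univ := by
      ext s
      simp only [mem_filter, mem_univ, true_and, mem_powersetCard_univ]
      exact ⟨And.right, fun hs => ⟨hs ▸ (mem_Icc.1 hi).1, hs⟩⟩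
    rw [hfiber, card_powersetCard, card_univ]
  · intro s hs
    exact mem_Icc.2 ⟨(mem_filter.1 hs).2, card_le_univ s⟩

section Rank

variable [Fintype α]

lemma invU_eq_biUnion_riseSections (F : Finset (Finset α)) (w : List α) :
    invU F w = univ.biUnion fun θ : Equiv.Perm α => riseSections F (w.map θ) := by
  simp only [invU, image_riseWord]

lemma invU_eq_self_of_isUpperSet {S : Finset (Finset α)} (hS : IsUpperSet (S : Set (Finset α)))
    (w : List α) : invU S w = S := by
  have himage : ∀ θ : Equiv.Perm α, S.image (riseWord S (w.map θ)) = S := fun θ => by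
    have hid : Set.EqOn (riseWord S (w.map θ)) id S := fun z hz =>
      riseWord_eq_self_of_isUpperSet hS _ hz
    rw [image_congr hid, image_id]
  ext z
  simp [invU, himage]

lemma rkF_eq_of_isUpperSet {S : Finset (Finset α)} (hS : IsUpperSet (S : Set (Finset α)))
    (hne : S.Nonempty) {k : ℕ} (hk : ∀ η ∈ minsF S, η.card = k) (w : List α) :
    rkF S w = k := by
  obtain ⟨z, hz⟩ := hne
  obtain ⟨η, hη, -⟩ := exists_mem_minsF_subset hz
  have hranks : {k' | ∃ η ∈ minsF S, η.card = k'} = {k} :=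
    Set.eq_singleton_iff_unique_mem.2
      ⟨⟨η, hη, hk η hη⟩, fun _ ⟨η', hη', h⟩ => h ▸ hk η' hη'⟩
  rw [rkF, invU_eq_self_of_isUpperSet hS, hranks, csInf_singleton]

variable {F : Finset (Finset α)} {w : List α}

lemma riseSections_subset_invU (θ : Equiv.Perm α) : riseSections F (w.map θ) ⊆ invU F w := by
  rw [invU_eq_biUnion_riseSections]
  exact subset_biUnion_of_mem (fun θ : Equiv.Perm α => riseSections F (w.map θ)) (mem_univ θ)

lemma exists_mem_minsF_invU_card_eq_rkF (hF : F.Nonempty) :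
    ∃ η ∈ minsF (invU F w), η.card = rkF F w := by
  obtain ⟨z, hz⟩ : (invU F w).Nonempty := univ_nonempty.biUnion fun θ _ => hF.image _
  obtain ⟨η, hη, -⟩ := exists_mem_minsF_subset hz
  have hranks : {k | ∃ η ∈ minsF (invU F w), η.card = k}.Nonempty := ⟨_, η, hη, rfl⟩
  exact Nat.sInf_mem hranks

lemma rkF_le_card_of_mem_invU {z : Finset α} (hz : z ∈ invU F w) : rkF F w ≤ z.card := by
  obtain ⟨m, hm, hmz⟩ := exists_mem_minsF_subset hz
  have hrk : rkF F w ≤ m.card := by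
    unfold rkF
    exact Nat.sInf_le ⟨m, hm, rfl⟩
  exact hrk.trans (card_le_card hmz)

lemma two_pow_sub_rkF_le_card (hw : ∀ x : α, x ∈ w) (hF : F.Nonempty) :
    2 ^ (Fintype.card α - rkF F w) ≤ F.card := by
  obtain ⟨η, hηmin, hηcard⟩ := exists_mem_minsF_invU_card_eq_rkF hF
  have hηU := mem_of_mem_minsF hηmin
  rw [invU_eq_biUnion_riseSections, mem_biUnion] at hηU
  obtain ⟨θ, -, hθ⟩ := hηU
  have hupper : IsUpperSet (riseSections F (w.map θ) : Set (Finset α)) :=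
    isUpperSet_riseSections F fun a => List.mem_map.2 ⟨θ.symm a, hw _, θ.apply_symm_apply a⟩
  calc 2 ^ (Fintype.card α - rkF F w) = (Icc η univ).card := by
        rw [card_Icc_finset (subset_univ η), card_univ, hηcard]
    _ ≤ (riseSections F (w.map θ)).card :=
        card_le_card fun s hs => hupper (mem_Icc.1 hs).1 hθ
    _ = F.card := card_riseSections _ _

lemma card_le_sum_choose_rkF :
    F.card ≤ ∑ i ∈ Icc (rkF F w) (Fintype.card α), (Fintype.card α).choose i := by
  calc F.card = (riseSections F (w.map (1 : Equiv.Perm α))).card := (card_riseSections _ _).symm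
    _ ≤ (univ.filter fun s : Finset α => rkF F w ≤ s.card).card := by
        refine card_le_card fun z hz => mem_filter.2 ⟨mem_univ _, rkF_le_card_of_mem_invU ?_⟩
        exact riseSections_subset_invU 1 hz
    _ = _ := card_filter_le_card_univ _

end Rank

theorem stmt_9_general {α : Type*} [DecidableEq α] [Fintype α]
    (F : Finset (Finset α)) (hFne : F.Nonempty)
    (w : List α) (hall : ∀ x : α, x ∈ w) :
    (2 ^ (Fintype.card α - rkF F w) ≤ F.card ∧
      F.card ≤ ∑ i ∈ Finset.Icc (rkF F w) (Fintype.card α), (Fintype.card α).choose i) ∧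
    ∀ k ≤ Fintype.card α,
      (∃ G : Finset (Finset α), UnionClosed G ∧ G.Nonempty ∧ rkF G w = k ∧
        G.card = 2 ^ (Fintype.card α - k)) ∧
      (∃ G : Finset (Finset α), UnionClosed G ∧ G.Nonempty ∧ rkF G w = k ∧
        G.card = ∑ i ∈ Finset.Icc k (Fintype.card α), (Fintype.card α).choose i) := by
  refine ⟨⟨two_pow_sub_rkF_le_card hall hFne, card_le_sum_choose_rkF⟩, fun k hk => ?_⟩
  obtain ⟨t, -, ht⟩ := exists_subset_card_eq (show k ≤ (univ : Finset α).card by simpa)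
  constructor
  · have htIcc : t ∈ Icc t univ := by simp
    refine ⟨Icc t univ, unionClosed_of_isUpperSet (isUpperSet_Icc_univ t), ⟨t, htIcc⟩, ?_, ?_⟩
    · exact rkF_eq_of_isUpperSet (isUpperSet_Icc_univ t) ⟨t, htIcc⟩
        (fun η hη => (card_eq_of_mem_minsF_Icc_univ hη).trans ht) w
    · rw [card_Icc_finset (subset_univ t), card_univ, ht]
  · have htfilter : t ∈ univ.filter fun s : Finset α => k ≤ s.card := by simp [ht]
    refine ⟨_, unionClosed_of_isUpperSet (isUpperSet_filter_le_card k), ⟨t, htfilter⟩, ?_,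
      card_filter_le_card_univ k⟩
    exact rkF_eq_of_isUpperSet (isUpperSet_filter_le_card k) ⟨t, htfilter⟩
      (fun η hη => card_eq_of_mem_minsF_filter_le_card hη) w

/-- Proposition 4.4: 2^(n − rk(𝔉)) ≤ |𝔉| ≤ Σ_{i ≥ rk(𝔉)} C(n,i), and both
bounds are tight: for every k ≤ n they are attained by suitable union-closed
families of rank k. -/
theorem stmt_9 {α : Type*} [DecidableEq α] [Fintype α]
    (F : Finset (Finset α)) (hF : UnionClosed F) (hFne : F.Nonempty)
    (w : List α) (hnd : w.Nodup) (hall : ∀ x : α, x ∈ w) :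
    (2 ^ (Fintype.card α - rkF F w) ≤ F.card ∧
      F.card ≤ ∑ i ∈ Finset.Icc (rkF F w) (Fintype.card α), (Fintype.card α).choose i) ∧
    ∀ k ≤ Fintype.card α,
      (∃ G : Finset (Finset α), UnionClosed G ∧ G.Nonempty ∧ rkF G w = k ∧
        G.card = 2 ^ (Fintype.card α - k)) ∧
      (∃ G : Finset (Finset α), UnionClosed G ∧ G.Nonempty ∧ rkF G w = k ∧
        G.card = ∑ i ∈ Finset.Icc k (Fintype.card α), (Fintype.card α).choose i) :=
  stmt_9_general F hFne w hall
end

section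
/- Let 𝔉 be a union-closed family of subsets of a finite set X, let a ∈ X, and let g ∈ 𝔉 with a ∉ g. Then g is covered in a (i.e. there exists h ∈ 𝔉 with a ∈ h and g ⋖ h) if and only if there exists h ∈ 𝔉 with a ∈ h such that (h \ {a})* = g. -/
open Finset

variable {α : Type*} [DecidableEq α]

/-- Proposition 4.9: g ∈ 𝔉 with a ∉ g is covered in a (there is h ∈ 𝔉_a with
g ⋖ h) iff there is h ∈ 𝔉_a with (h \ {a})* = g. -/
theorem stmt_11 {α : Type*} [DecidableEq α] [Fintype α]
    (F : Finset (Finset α)) (hF : UnionClosed F)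
    (a : α) (g : Finset α) (hg : g ∈ F) (hag : a ∉ g) :
    (∃ h ∈ F, a ∈ h ∧ g ⊂ h ∧ ∀ f ∈ F, ¬(g ⊂ f ∧ f ⊂ h)) ↔
    (∃ h ∈ F, a ∈ h ∧ starOp F (h.erase a) = g) := by
  constructor
  · rintro ⟨h, hhF, hah, hgh, hcov⟩
    refine ⟨h, hhF, hah, ?_⟩
    rw [starOp]
    apply subset_antisymm
    · show (F.filter fun f => f ⊆ h.erase a).sup id ≤ g
      apply Finset.sup_le
      intro f hf
      simp only [Finset.mem_filter] at hf
      obtain ⟨hfF, hfe⟩ := hf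
      have hufF : g ∪ f ∈ F := hF g hg f hfF
      have hsub : g ∪ f ⊆ h := Finset.union_subset hgh.subset (hfe.trans (Finset.erase_subset a h))
      have hne : g ∪ f ≠ h := by
        intro he
        have : a ∈ g ∪ f := he ▸ hah
        rcases Finset.mem_union.mp this with h1 | h1
        · exact hag h1
        · exact (Finset.notMem_erase a h) (hfe h1)
      have hcov' := hcov (g ∪ f) hufF
      have : ¬ g ⊂ g ∪ f := fun hc => hcov' ⟨hc, lt_of_le_of_ne hsub hne⟩
      have heq : g ∪ f = g := by
        rcases eq_or_ne (g ∪ f) g with he | hne'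
        · exact he
        · exact absurd (lt_of_le_of_ne Finset.subset_union_left (Ne.symm hne')) this
      intro x hx
      exact heq ▸ Finset.mem_union_right g hx
    · exact Finset.le_sup (f := id)
        (Finset.mem_filter.mpr (show g ∈ F ∧ g ⊆ h.erase a from ⟨hg, (Finset.subset_erase).mpr ⟨hgh.subset, hag⟩⟩))
  · rintro ⟨h, hhF, hah, hstar⟩
    have hge : g ⊆ h.erase a := by
      rw [← hstar, starOp]
      show (F.filter fun f => f ⊆ h.erase a).sup id ≤ h.erase a
      exact Finset.sup_le fun f hf => (Finset.mem_filter.mp hf).2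
    have hgh : g ⊂ h :=
      lt_of_le_of_lt hge (Finset.erase_ssubset hah)
    set S := F.filter (fun f => g ⊂ f ∧ f ⊆ h) with hS
    have hhS : h ∈ S := Finset.mem_filter.mpr ⟨hhF, hgh, Finset.Subset.refl h⟩
    obtain ⟨h', hh'S, hmin⟩ := Finset.exists_min_image S Finset.card ⟨h, hhS⟩
    obtain ⟨hh'F, hgh', hh'h⟩ := Finset.mem_filter.mp hh'S
    have hah' : a ∈ h' := by
      by_contra hna
      have : h' ⊆ h.erase a := (Finset.subset_erase).mpr ⟨hh'h, hna⟩
      have : h' ⊆ g := by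
        rw [← hstar, starOp]
        exact Finset.le_sup (f := id) (Finset.mem_filter.mpr (show h' ∈ F ∧ h' ⊆ h.erase a from ⟨hh'F, this⟩))
      exact absurd (this.antisymm hgh'.subset) (ne_of_gt hgh')
    refine ⟨h', hh'F, hah', hgh', ?_⟩
    rintro f hfF ⟨hgf, hfh'⟩
    have hfS : f ∈ S := Finset.mem_filter.mpr ⟨hfF, hgf, hfh'.subset.trans hh'h⟩
    exact absurd (hmin f hfS) (not_le_of_gt (Finset.card_lt_card hfh'))
end
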